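/- arXiv:2102.12448 — 2 statements merged into one kernel-verified Lean document; each statement's English description precedes it below -/
import Mathlib

section
/- If the field f ranges over the finite value set {n_1, ..., n_m}, then the negation of a test is equivalent to the sum of the complementary tests: for every history h, ⟦¬(f = n_i)⟧ h = ⟦Σ_{j ≠ i} (f = n_j)⟧ h (NEG-ELIM). -/
/-- Packets: functions from fields to values. -/
abbrev Packet (F V : Type) := F → V

/-- Histories: a head packet together with a list of past packets. -/
abbrev Hist (F V : Type) := Packet F V × List (Packet F V)

/-- NetKAT policies (dup-free). -/
inductive Pol (F V : Type) : Type where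
  | zero : Pol F V
  | one : Pol F V
  | test : F → V → Pol F V
  | mod : F → V → Pol F V
  | neg : Pol F V → Pol F V
  | plus : Pol F V → Pol F V → Pol F V
  | seq : Pol F V → Pol F V → Pol F V
  | star : Pol F V → Pol F V

/-- Iterates `F^i` used in the semantics of Kleene star:
`F^0 h = {h}` and `F^{i+1} = f • F^i` (Kleisli). -/
def iterF {F V : Type} (f : Hist F V → Set (Hist F V)) :
    ℕ → Hist F V → Set (Hist F V)
  | 0, h => {h}
  | n + 1, h => ⋃ h' ∈ f h, iterF f n h'

/-- Standard packet-history semantics of NetKAT. -/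
def sem {F V : Type} [DecidableEq F] [DecidableEq V] :
    Pol F V → Hist F V → Set (Hist F V)
  | .zero, _ => ∅
  | .one, h => {h}
  | .test f n, h => if h.1 f = n then {h} else ∅
  | .mod f n, h => {(Function.update h.1 f n, h.2)}
  | .neg a, h => {h} \ sem a h
  | .plus p q, h => sem p h ∪ sem q h
  | .seq p q, h => ⋃ h' ∈ sem p h, sem q h'
  | .star p, h => ⋃ i, iterF (sem p) i h

/-- `pow q m` is the `m`-fold sequential composition of `q`, with `pow q 0 = 1`. -/
def Pol.pow {F V : Type} (q : Pol F V) : ℕ → Pol F V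
  | 0 => .one
  | m + 1 => .seq q (q.pow m)

/-- Finite sum (disjunction) of a list of policies. -/
def bigPlus {F V : Type} : List (Pol F V) → Pol F V
  | [] => .zero
  | p :: l => .plus p (bigPlus l)


lemma sem_bigPlus_tests {F V : Type} [DecidableEq F] [DecidableEq V]
    (f : F) (l : List V) (h : Hist F V) :
    sem (bigPlus (l.map (Pol.test f))) h = if h.1 f ∈ l then {h} else ∅ := by
  induction l with
  | nil => simp [bigPlus, sem]
  | cons a t ih =>
    simp only [List.map_cons, bigPlus, sem, ih, List.mem_cons]
    by_cases h1 : h.1 f = a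
    · subst h1; by_cases h2 : h.1 f ∈ t <;> simp [h2]
    · by_cases h2 : h.1 f ∈ t <;> simp [h1, h2]

/-- NEG-ELIM: with a finite value domain, ⟦¬(f = n)⟧ h = ⟦Σ_{n′ ≠ n} (f = n′)⟧ h. -/
theorem neg_elim {F V : Type} [DecidableEq F] [DecidableEq V] [Fintype V]
    (f : F) (n : V) (h : Hist F V) :
    sem (Pol.neg (Pol.test f n)) h =
    sem (bigPlus (((Finset.univ : Finset V).filter (fun n2 => n2 ≠ n)).toList.map
          (Pol.test f))) h := by
  rw [sem_bigPlus_tests]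
  simp only [sem, Finset.mem_toList, Finset.mem_filter, Finset.mem_univ, true_and]
  by_cases h1 : h.1 f = n <;> simp [h1]
end

section
/- The least-fixpoint law KA-LFP-L holds semantically for NetKAT: if for all histories h, ⟦q⟧ h ∪ ⟦p·r⟧ h ⊆ ⟦r⟧ h, then for all h, ⟦p* · q⟧ h ⊆ ⟦r⟧ h. -/
/-- KA-LFP-L: if q + p·r ≤ r then p*·q ≤ r, semantically. -/
theorem lfp_l {F V : Type} [DecidableEq F] [DecidableEq V]
    (p q r : Pol F V)
    (hyp : ∀ h : Hist F V, sem q h ∪ sem (Pol.seq p r) h ⊆ sem r h) :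
    ∀ h : Hist F V, sem (Pol.seq (Pol.star p) q) h ⊆ sem r h := by
  have key : ∀ i (h h' : Hist F V), h' ∈ iterF (sem p) i h → sem q h' ⊆ sem r h := by
    intro i
    induction i with
    | zero =>
      intro h h' hm x hx
      have e : h' = h := hm
      exact hyp h (Or.inl (e ▸ hx))
    | succ n ih =>
      intro h h' hm x hx
      rw [show iterF (sem p) (n+1) h = ⋃ h'' ∈ sem p h, iterF (sem p) n h'' from rfl] at hm
      rw [Set.mem_iUnion₂] at hm
      obtain ⟨h'', hp, hit⟩ := hm
      apply hyp h
      right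
      show x ∈ ⋃ y ∈ sem p h, sem r y
      rw [Set.mem_iUnion₂]
      exact ⟨h'', hp, ih h'' h' hit hx⟩
  intro h x hx
  have hx' : x ∈ ⋃ h' ∈ (⋃ i, iterF (sem p) i h), sem q h' := hx
  rw [Set.mem_iUnion₂] at hx'
  obtain ⟨h', hi, hq⟩ := hx'
  rw [Set.mem_iUnion] at hi
  obtain ⟨i, hi⟩ := hi
  exact key i h h' hi hq
end
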